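/- Let A be an m×n real matrix whose columns have ℓ2-norm 1, let s₁, s₂ ≤ n be positive integers and α ≥ 0. Suppose x, y ∈ ℝ^n have disjoint supports, x is s₁-sparse, ‖y‖₁ ≤ α·s₂ and ‖y‖_∞ ≤ α. Then |⟨Ax, Ay⟩| ≤ α·√s₂·μ₁(A, s₁+s₂−1)·‖x‖₂. -/

import Mathlib

/-!
Write `G = AᵀA` for the Gram matrix and `d = x ᵥ* G`, so that `⟨Ax, Ay⟩ = ∑ⱼ yⱼ dⱼ`, where only
indices `j` outside the support `S` of `x` contribute. Since `0 ≤ |yⱼ| ≤ α` and `∑ |yⱼ| ≤ α s₂`,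
an exchange argument shows `∑ⱼ |yⱼ| |dⱼ| ≤ α ∑_{j ∈ T} |dⱼ|` for some `T` disjoint from `S`
with `|T| ≤ s₂`. By weighted Cauchy–Schwarz, `dⱼ² ≤ μ₁(s₁) ∑_{i ∈ S} xᵢ² |Gᵢⱼ|`; summing over `T`
gives `∑_{j ∈ T} dⱼ² ≤ μ₁(s₁) μ₁(s₂) ‖x‖²`, and Cauchy–Schwarz over `T` together with
`μ₁(s₁), μ₁(s₂) ≤ μ₁(s₁ + s₂ - 1)` finishes the proof.
-/

open scoped Classical

/-- Cumulative coherence function μ₁(A, s). -/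
noncomputable def mu1 {m n : ℕ} (A : Matrix (Fin m) (Fin n) ℝ) (s : ℕ) : ℝ :=
  sSup {t : ℝ | ∃ S : Finset (Fin n), S.card ≤ s ∧ ∃ i : Fin n, i ∉ S ∧
    t = ∑ j ∈ S, |∑ k : Fin m, A k i * A k j|}

open Finset Matrix

section Selection

variable {ι : Type*} [DecidableEq ι] {U T : Finset ι} {w c : ι → ℝ} {α : ℝ}

lemma sum_mul_le_mul_sum_of_threshold {t : ℝ} (hTU : T ⊆ U) (hw0 : ∀ j ∈ U, 0 ≤ w j)
    (hwα : ∀ j ∈ U, w j ≤ α) (hsum : ∑ j ∈ U, w j ≤ α * #T) (ht : 0 ≤ t)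
    (hlow : ∀ k ∈ U \ T, c k ≤ t) (hhigh : ∀ j ∈ T, t ≤ c j) :
    ∑ j ∈ U, w j * c j ≤ α * ∑ j ∈ T, c j := by
  have hout : ∑ j ∈ U \ T, w j * c j ≤ t * ∑ j ∈ U \ T, w j := by
    rw [mul_sum]
    exact sum_le_sum fun k hk => by
      nlinarith [hlow k hk, hw0 k (mem_sdiff.mp hk).1]
  have hslack : ∑ j ∈ U \ T, w j ≤ ∑ j ∈ T, (α - w j) := by
    rw [sum_sub_distrib, sum_const, nsmul_eq_mul, sum_sdiff_eq_sub hTU]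
    linarith
  have hin : t * ∑ j ∈ T, (α - w j) ≤ ∑ j ∈ T, (α - w j) * c j := by
    rw [mul_sum]
    exact sum_le_sum fun j hj => by
      nlinarith [hhigh j hj, hwα j (hTU hj)]
  calc ∑ j ∈ U, w j * c j = ∑ j ∈ U \ T, w j * c j + ∑ j ∈ T, w j * c j :=
        (sum_sdiff hTU).symm
    _ ≤ ∑ j ∈ T, (α - w j) * c j + ∑ j ∈ T, w j * c j := by
        gcongr
        exact hout.trans ((mul_le_mul_of_nonneg_left hslack ht).trans hin)
    _ = α * ∑ j ∈ T, c j := by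
        rw [← sum_add_distrib, mul_sum]
        exact sum_congr rfl fun j _ => by ring

lemma le_of_isMaxOn_sum_powersetCard {s : ℕ} (hT : T ∈ powersetCard s U)
    (hmax : IsMaxOn (fun T' => ∑ j ∈ T', c j) (powersetCard s U) T)
    {k j : ι} (hk : k ∈ U \ T) (hj : j ∈ T) : c k ≤ c j := by
  obtain ⟨hTU, hTcard⟩ := mem_powersetCard.mp hT
  obtain ⟨hkU, hkT⟩ := mem_sdiff.mp hk
  have hkT' : k ∉ T.erase j := fun h => hkT (mem_of_mem_erase h)
  have hswap : insert k (T.erase j) ∈ powersetCard s U := by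
    refine mem_powersetCard.mpr ⟨insert_subset hkU ((erase_subset j T).trans hTU), ?_⟩
    rw [card_insert_of_notMem hkT', card_erase_of_mem hj, hTcard]
    have := card_pos.mpr ⟨j, hj⟩
    omega
  have hle : ∑ i ∈ insert k (T.erase j), c i ≤ ∑ i ∈ T, c i := hmax hswap
  rw [sum_insert hkT', ← add_sum_erase T c hj] at hle
  linarith

lemma exists_subset_card_le_sum_mul_le {s : ℕ} (hw0 : ∀ j ∈ U, 0 ≤ w j)
    (hwα : ∀ j ∈ U, w j ≤ α) (hc : ∀ j ∈ U, 0 ≤ c j) (hsum : ∑ j ∈ U, w j ≤ α * s) :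
    ∃ T ⊆ U, #T ≤ s ∧ ∑ j ∈ U, w j * c j ≤ α * ∑ j ∈ T, c j := by
  by_cases hUs : #U ≤ s
  · refine ⟨U, subset_rfl, hUs, ?_⟩
    rw [mul_sum]
    exact sum_le_sum fun j hj => mul_le_mul_of_nonneg_right (hwα j hj) (hc j hj)
  rw [not_le] at hUs
  obtain ⟨T, hT, hmax⟩ := exists_max_image (powersetCard s U) (fun T => ∑ j ∈ T, c j)
    (powersetCard_nonempty.mpr hUs.le)
  obtain ⟨hTU, hTcard⟩ := mem_powersetCard.mp hT
  obtain ⟨k, hk, hkmax⟩ := exists_max_image (U \ T) c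
    (by rw [← card_pos, card_sdiff_of_subset hTU]; omega)
  refine ⟨T, hTU, hTcard.le, sum_mul_le_mul_sum_of_threshold hTU hw0 hwα (by rwa [hTcard])
    (hc k (mem_sdiff.mp hk).1) hkmax fun j hj =>
      le_of_isMaxOn_sum_powersetCard hT (isMaxOn_iff.mpr hmax) hk hj⟩

end Selection

section Coherence

variable {m n : ℕ} (A : Matrix (Fin m) (Fin n) ℝ)

lemma le_mu1 {s : ℕ} {S : Finset (Fin n)} {i : Fin n} (hi : i ∉ S) (hS : #S ≤ s) :
    ∑ j ∈ S, |(Aᵀ * A) i j| ≤ mu1 A s := by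
  refine le_csSup ?_ ⟨S, hS, i, hi, rfl⟩
  refine (Set.finite_range fun p : Finset (Fin n) × Fin n =>
    ∑ j ∈ p.1, |∑ k, A k p.2 * A k j|).subset ?_ |>.bddAbove
  rintro t ⟨S, -, i, -, rfl⟩
  exact ⟨(S, i), rfl⟩

lemma mu1_nonneg (s : ℕ) : 0 ≤ mu1 A s :=
  Real.sSup_nonneg <| by
    rintro t ⟨S, -, i, -, rfl⟩
    exact sum_nonneg fun _ _ => abs_nonneg _

lemma mu1_mono {s s' : ℕ} (h : s ≤ s') : mu1 A s ≤ mu1 A s' :=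
  Real.sSup_le (by rintro t ⟨S, hS, i, hi, rfl⟩; exact le_mu1 A hi (hS.trans h))
    (mu1_nonneg A s')

lemma transpose_mul_self_comm (i j : Fin n) : (Aᵀ * A) i j = (Aᵀ * A) j i := by
  rw [← transpose_apply (Aᵀ * A), transpose_mul, transpose_transpose]

variable {x : Fin n → ℝ} {S T : Finset (Fin n)} {s t : ℕ}

lemma sq_vecMul_gram_le (hS : #S ≤ s) (hx : ∀ i ∉ S, x i = 0) {j : Fin n} (hj : j ∉ S) :
    (x ᵥ* (Aᵀ * A)) j ^ 2 ≤ mu1 A s * ∑ i ∈ S, x i ^ 2 * |(Aᵀ * A) i j| := by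
  have hsupp : (x ᵥ* (Aᵀ * A)) j = ∑ i ∈ S, x i * (Aᵀ * A) i j := by
    rw [vecMul_apply_eq_sum]
    exact (sum_subset (subset_univ S) fun i _ hi => by rw [hx i hi, zero_mul]).symm
  have hcoh : ∑ i ∈ S, |(Aᵀ * A) i j| ≤ mu1 A s := by
    simpa only [transpose_mul_self_comm A _ j] using le_mu1 A hj hS
  rw [hsupp]
  calc (∑ i ∈ S, x i * (Aᵀ * A) i j) ^ 2
      ≤ (∑ i ∈ S, |(Aᵀ * A) i j|) * ∑ i ∈ S, x i ^ 2 * |(Aᵀ * A) i j| :=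
        sum_sq_le_sum_mul_sum_of_sq_le_mul S (fun _ _ => abs_nonneg _)
          (fun _ _ => by positivity) fun i _ =>
            le_of_eq (by rw [mul_pow, ← sq_abs ((Aᵀ * A) i j)]; ring)
    _ ≤ mu1 A s * ∑ i ∈ S, x i ^ 2 * |(Aᵀ * A) i j| := by
        gcongr

lemma sum_sq_vecMul_gram_le (hS : #S ≤ s) (hT : #T ≤ t) (hST : Disjoint S T)
    (hx : ∀ i ∉ S, x i = 0) :
    ∑ j ∈ T, (x ᵥ* (Aᵀ * A)) j ^ 2 ≤ mu1 A s * mu1 A t * ∑ i, x i ^ 2 := by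
  calc ∑ j ∈ T, (x ᵥ* (Aᵀ * A)) j ^ 2
      ≤ ∑ j ∈ T, mu1 A s * ∑ i ∈ S, x i ^ 2 * |(Aᵀ * A) i j| :=
        sum_le_sum fun j hj => sq_vecMul_gram_le A hS hx (disjoint_right.mp hST hj)
    _ = mu1 A s * ∑ i ∈ S, x i ^ 2 * ∑ j ∈ T, |(Aᵀ * A) i j| := by
        rw [← mul_sum, sum_comm]
        simp only [mul_sum]
    _ ≤ mu1 A s * ∑ i ∈ S, x i ^ 2 * mu1 A t := by
        gcongr with i hi
        · exact mu1_nonneg A s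
        · exact le_mu1 A (disjoint_left.mp hST hi) hT
    _ ≤ mu1 A s * mu1 A t * ∑ i, x i ^ 2 := by
        rw [← sum_mul, mul_comm (∑ i ∈ S, _), ← mul_assoc]
        exact mul_le_mul_of_nonneg_left (sum_le_univ_sum_of_nonneg fun _ => sq_nonneg _)
          (mul_nonneg (mu1_nonneg A s) (mu1_nonneg A t))

lemma sum_abs_vecMul_gram_le (hS : #S ≤ s) (hT : #T ≤ t) (hST : Disjoint S T)
    (hx : ∀ i ∉ S, x i = 0) :
    ∑ j ∈ T, |(x ᵥ* (Aᵀ * A)) j| ≤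
      Real.sqrt t * Real.sqrt (mu1 A s * mu1 A t) * Real.sqrt (∑ i, x i ^ 2) := by
  have hμ := mul_nonneg (mu1_nonneg A s) (mu1_nonneg A t)
  rw [← Real.sqrt_mul (Nat.cast_nonneg t), ← Real.sqrt_mul (by positivity)]
  refine (Real.le_sqrt (sum_nonneg fun _ _ => abs_nonneg _) (by positivity)).mpr ?_
  calc (∑ j ∈ T, |(x ᵥ* (Aᵀ * A)) j|) ^ 2 ≤ #T * ∑ j ∈ T, |(x ᵥ* (Aᵀ * A)) j| ^ 2 :=
        sq_sum_le_card_mul_sum_sq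
    _ ≤ t * (mu1 A s * mu1 A t * ∑ i, x i ^ 2) := by
        simp only [sq_abs]
        gcongr
        exact sum_sq_vecMul_gram_le A hS hT hST hx
    _ = _ := by ring

end Coherence

theorem stmt3_general {m n : ℕ} (A : Matrix (Fin m) (Fin n) ℝ)
    (s₁ s₂ : ℕ) (hs₁ : 1 ≤ s₁) (hs₂ : 1 ≤ s₂)
    (α : ℝ) (hα : 0 ≤ α)
    (x y : Fin n → ℝ)
    (hdisj : ∀ i, x i = 0 ∨ y i = 0)
    (hx : (Finset.univ.filter fun i => x i ≠ 0).card ≤ s₁)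
    (hy1 : ∑ i, |y i| ≤ α * s₂)
    (hyinf : ∀ i, |y i| ≤ α) :
    |∑ k, A.mulVec x k * A.mulVec y k| ≤
      α * Real.sqrt s₂ * mu1 A (s₁ + s₂ - 1) * Real.sqrt (∑ i, (x i) ^ 2) := by
  set S := univ.filter fun i => x i ≠ 0
  set d := x ᵥ* (Aᵀ * A)
  have hxS : ∀ i ∉ S, x i = 0 := fun i hi => by simpa [S] using hi
  have hinner : ∑ k, A.mulVec x k * A.mulVec y k = ∑ j ∈ Sᶜ, d j * y j := by
    change (A *ᵥ x) ⬝ᵥ (A *ᵥ y) = _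
    rw [dotProduct_mulVec, vecMul_mulVec, dotProduct]
    refine (sum_subset (subset_univ _) fun j _ hj => ?_).symm
    rw [(hdisj j).resolve_left (by simpa [S] using hj), mul_zero]
  obtain ⟨T, hTS, hT, hsel⟩ := exists_subset_card_le_sum_mul_le (U := Sᶜ) (w := fun j => |y j|)
    (c := fun j => |d j|) (fun _ _ => abs_nonneg _) (fun j _ => hyinf j)
    (fun _ _ => abs_nonneg _) ((sum_le_univ_sum_of_nonneg fun _ => abs_nonneg _).trans hy1)
  have hμ : Real.sqrt (mu1 A s₁ * mu1 A s₂) ≤ mu1 A (s₁ + s₂ - 1) := by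
    rw [← Real.sqrt_mul_self (mu1_nonneg A (s₁ + s₂ - 1))]
    exact Real.sqrt_le_sqrt (mul_le_mul (mu1_mono A (by omega)) (mu1_mono A (by omega))
      (mu1_nonneg A s₂) (mu1_nonneg A _))
  calc |∑ k, A.mulVec x k * A.mulVec y k| ≤ ∑ j ∈ Sᶜ, |y j| * |d j| := by
        rw [hinner]
        exact (abs_sum_le_sum_abs _ _).trans_eq
          (sum_congr rfl fun j _ => by rw [abs_mul, mul_comm])
    _ ≤ α * ∑ j ∈ T, |d j| := hsel
    _ ≤ α * (Real.sqrt s₂ * Real.sqrt (mu1 A s₁ * mu1 A s₂) * Real.sqrt (∑ i, x i ^ 2)) := by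
        gcongr
        exact sum_abs_vecMul_gram_le A hx hT (subset_compl_iff_disjoint_left.mp hTS) hxS
    _ ≤ α * Real.sqrt s₂ * mu1 A (s₁ + s₂ - 1) * Real.sqrt (∑ i, (x i) ^ 2) := by
        rw [mul_assoc α, mul_assoc α]
        gcongr

/-- If `x, y` have disjoint supports, `x` is `s₁`-sparse, `‖y‖₁ ≤ α s₂` and `‖y‖_∞ ≤ α`,
then `|⟨Ax, Ay⟩| ≤ α √s₂ μ₁(A, s₁+s₂−1) ‖x‖₂`. -/
theorem stmt3 {m n : ℕ} (A : Matrix (Fin m) (Fin n) ℝ)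
    (hA : ∀ j, ∑ k, (A k j) ^ 2 = 1)
    (s₁ s₂ : ℕ) (hs₁ : 1 ≤ s₁) (hs₂ : 1 ≤ s₂) (hs₁n : s₁ ≤ n) (hs₂n : s₂ ≤ n)
    (α : ℝ) (hα : 0 ≤ α)
    (x y : Fin n → ℝ)
    (hdisj : ∀ i, x i = 0 ∨ y i = 0)
    (hx : (Finset.univ.filter fun i => x i ≠ 0).card ≤ s₁)
    (hy1 : ∑ i, |y i| ≤ α * s₂)
    (hyinf : ∀ i, |y i| ≤ α) :
    |∑ k, A.mulVec x k * A.mulVec y k| ≤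
      α * Real.sqrt s₂ * mu1 A (s₁ + s₂ - 1) * Real.sqrt (∑ i, (x i) ^ 2) :=
  stmt3_general A s₁ s₂ hs₁ hs₂ α hα x y hdisj hx hy1 hyinf
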